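/- Let μ > 0 and g > 0, and define Ψ : ℝ² → ℝ by Ψ(a) = μ‖a‖²/2 + g‖a‖. Then for every α ∈ ℝ², the supremum over a ∈ ℝ² of ⟪α, a⟫ − Ψ(a) is attained, and it equals 0 if ‖α‖ ≤ g and equals (‖α‖ − g)²/(2μ) if ‖α‖ > g. That is, the convex conjugate of Ψ is Ψ*(α) = 0 for ‖α‖ ≤ g and Ψ*(α) = (‖α‖ − g)²/(2μ) for ‖α‖ > g. -/

import Mathlib

/-!
By Cauchy–Schwarz, `⟪α, a⟫ - Ψ(a) ≤ (‖α‖ - g) t - μ t² / 2` with `t = ‖a‖`, with equality when `a` is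
a nonnegative multiple of `α`. Hence `Ψ*(α)` is the maximum over `t ≥ 0` of this concave quadratic,
attained at `t = 0` if `‖α‖ ≤ g` and at `t = (‖α‖ - g) / μ` otherwise.
-/

open RealInnerProductSpace

theorem mul_sub_half_mul_sq_nonpos {μ s t : ℝ} (hμ : 0 ≤ μ) (hs : s ≤ 0) (ht : 0 ≤ t) :
    s * t - μ * t ^ 2 / 2 ≤ 0 := by
  nlinarith [mul_nonneg hμ (sq_nonneg t)]

theorem mul_sub_half_mul_sq_le_sq_div {μ : ℝ} (hμ : 0 < μ) (s t : ℝ) :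
    s * t - μ * t ^ 2 / 2 ≤ s ^ 2 / (2 * μ) := by
  rw [le_div_iff₀ (by positivity)]
  nlinarith [sq_nonneg (μ * t - s)]

theorem mul_div_sub_half_mul_sq_div {μ : ℝ} (hμ : μ ≠ 0) (s : ℝ) :
    s * (s / μ) - μ * (s / μ) ^ 2 / 2 = s ^ 2 / (2 * μ) := by
  field_simp
  ring

section

variable {E : Type*} [NormedAddCommGroup E] [InnerProductSpace ℝ E]

theorem inner_sub_bingham_le (μ g : ℝ) (α a : E) :
    ⟪α, a⟫ - (μ * ‖a‖ ^ 2 / 2 + g * ‖a‖) ≤ (‖α‖ - g) * ‖a‖ - μ * ‖a‖ ^ 2 / 2 := by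
  linarith [real_inner_le_norm α a]

theorem inner_smul_self_sub_bingham (μ g : ℝ) (α : E) {c : ℝ} (hc : 0 ≤ c) :
    ⟪α, c • α⟫ - (μ * ‖c • α‖ ^ 2 / 2 + g * ‖c • α‖) =
      (‖α‖ - g) * (c * ‖α‖) - μ * (c * ‖α‖) ^ 2 / 2 := by
  rw [real_inner_smul_right, real_inner_self_eq_norm_sq, norm_smul, Real.norm_of_nonneg hc]
  ring

end

/-- Convex conjugate of the Bingham energy density `Ψ(a) = μ‖a‖²/2 + g‖a‖` on `ℝ²`:
the supremum defining `Ψ*(α)` is attained and equals `0` if `‖α‖ ≤ g` and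
`(‖α‖ − g)²/(2μ)` if `‖α‖ > g`. -/
theorem stmt_7 {μ g : ℝ} (hμ : 0 < μ) (hg : 0 < g) (α : EuclideanSpace ℝ (Fin 2)) :
    IsGreatest
      (Set.range fun a : EuclideanSpace ℝ (Fin 2) =>
        (inner ℝ α a : ℝ) - (μ * ‖a‖ ^ 2 / 2 + g * ‖a‖))
      (if ‖α‖ ≤ g then 0 else (‖α‖ - g) ^ 2 / (2 * μ)) := by
  refine ⟨?attained, ?bound⟩
  case attained =>
    split_ifs with h
    · exact ⟨0, by simp⟩
    · have hα : 0 < ‖α‖ := hg.trans (not_le.mp h)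
      have hc : 0 ≤ (‖α‖ - g) / μ / ‖α‖ := by
        have : 0 ≤ ‖α‖ - g := by linarith
        positivity
      refine ⟨((‖α‖ - g) / μ / ‖α‖) • α, ?_⟩
      dsimp only
      rw [inner_smul_self_sub_bingham μ g α hc, div_mul_cancel₀ _ hα.ne',
        mul_div_sub_half_mul_sq_div hμ.ne']
  case bound =>
    rintro _ ⟨a, rfl⟩
    refine (inner_sub_bingham_le μ g α a).trans ?_
    split_ifs with h
    · exact mul_sub_half_mul_sq_nonpos hμ.le (sub_nonpos.mpr h) (norm_nonneg a)
    · exact mul_sub_half_mul_sq_le_sq_div hμ _ _
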